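/- Let X = [0,1]^d, (u^n)_{n≥0} a (t,d)-sequence in base b ≥ 2, and K : X → P(X) a Markov kernel satisfying Assumptions A1 and A2. For k ≥ t and x̃ ∈ X define the dispersion d_X(k, x̃) = sup_{x∈X} min_{0 ≤ n < b^k} ‖F_K^{-1}(x̃, u^n) − x‖_∞. Then sup_{x̃∈X} d_X(k, x̃) → 0 as k → ∞. -/

import Mathlib

open MeasureTheory ProbabilityTheory Set Filter
open scoped Classical

/-- The closed unit cube `[0,1]^d` in `ℝ^d` (modeled as `Fin d → ℝ` with the sup norm). -/
def cube (d : ℕ) : Set (Fin d → ℝ) := {x | ∀ i, x i ∈ Set.Icc (0:ℝ) 1}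

/-- Membership in the `b`-ary box `∏_j [c_j b^{-e_j}, (c_j+1) b^{-e_j})`. -/
def inBaryBox {d : ℕ} (b : ℕ) (e c : Fin d → ℕ) (x : Fin d → ℝ) : Prop :=
  ∀ j, (c j : ℝ) / (b : ℝ) ^ (e j) ≤ x j ∧ x j < ((c j : ℝ) + 1) / (b : ℝ) ^ (e j)

/-- The block `{u^n : A ≤ n < A + b^m}` is a `(t,m,d)`-net in base `b`: every `b`-ary box of
volume `b^{t-m}` contains exactly `b^t` points of the block. -/
def IsNetBlock {d : ℕ} (b t m : ℕ) (u : ℕ → Fin d → ℝ) (A : ℕ) : Prop :=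
  ∀ e c : Fin d → ℕ, (∀ j, c j < b ^ (e j)) → (∑ j, e j) = m - t →
    ((Finset.Ico A (A + b ^ m)).filter (fun n => inBaryBox b e c (u n))).card = b ^ t

/-- `(u^n)_{n≥0}` is a `(t,d)`-sequence in base `b`. -/
def IsTSeq {d : ℕ} (b t : ℕ) (u : ℕ → Fin d → ℝ) : Prop :=
  (∀ n i, u n i ∈ Set.Ico (0:ℝ) 1) ∧
  ∀ a m : ℕ, t ≤ m → IsNetBlock b t m u (a * b ^ m)

/-- `(v^n)_{n≥0}` is a scalar `(t,1)`-sequence in base `b`. -/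
def IsTSeq1 (b t : ℕ) (v : ℕ → ℝ) : Prop :=
  (∀ n, v n ∈ Set.Ico (0:ℝ) 1) ∧
  ∀ a m : ℕ, t ≤ m → ∀ c : ℕ, c < b ^ (m - t) →
    ((Finset.Ico (a * b ^ m) (a * b ^ m + b ^ m)).filter
      (fun n => (c : ℝ) / (b:ℝ) ^ (m - t) ≤ v n ∧ v n < ((c : ℝ) + 1) / (b:ℝ) ^ (m - t))).card
      = b ^ t

/-- `k_n`: the smallest integer `k` such that `n < b^k`. -/
noncomputable def kOf (b n : ℕ) : ℕ := sInf {k | n < b ^ k}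

section Rosenblatt

variable {d : ℕ}

/-- Marginal of the density `κ(·|x)` over the first `i` coordinates: the first `i` coordinates
are fixed to those of `y`, the remaining ones are integrated out over the unit cube. -/
noncomputable def marg (κ : (Fin d → ℝ) → (Fin d → ℝ) → ℝ) (i : ℕ) (x y : Fin d → ℝ) : ℝ :=
  ∫ z in cube d, κ x (fun j => if (j : ℕ) < i then y j else z j)

/-- `K_i(y_i | y_{1:i-1}, x)`: the `i`-th conditional density of the kernel density `κ`. -/
noncomputable def condDensity (κ : (Fin d → ℝ) → (Fin d → ℝ) → ℝ) (i : Fin d)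
    (x y : Fin d → ℝ) : ℝ :=
  marg κ ((i : ℕ) + 1) x y / marg κ (i : ℕ) x y

/-- `F_{K_i}(s | x, y_{1:i-1})`: the `i`-th conditional CDF of the kernel density `κ`. -/
noncomputable def condCDF' (κ : (Fin d → ℝ) → (Fin d → ℝ) → ℝ) (i : Fin d)
    (x y : Fin d → ℝ) (s : ℝ) : ℝ :=
  ∫ r in (0:ℝ)..s, condDensity κ i x (Function.update y i r)

/-- The Rosenblatt transform `F_K(x,·)` of the kernel with density `κ`. -/
noncomputable def Ros (κ : (Fin d → ℝ) → (Fin d → ℝ) → ℝ) (x y : Fin d → ℝ) : Fin d → ℝ :=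
  fun i => condCDF' κ i x y (y i)

/-- Assumption (A1): each conditional CDF is strictly increasing in its main argument. -/
def A1 (κ : (Fin d → ℝ) → (Fin d → ℝ) → ℝ) : Prop :=
  ∀ x ∈ cube d, ∀ y ∈ cube d, ∀ i : Fin d,
    StrictMonoOn (fun s => condCDF' κ i x y s) (Set.Icc (0:ℝ) 1)

/-- Assumption (A2): the density `κ` is continuous on `X²` and bounded below by `Klow > 0`. -/
def A2 (κ : (Fin d → ℝ) → (Fin d → ℝ) → ℝ) (Klow : ℝ) : Prop :=
  ContinuousOn (fun p : (Fin d → ℝ) × (Fin d → ℝ) => κ p.1 p.2) ((cube d) ×ˢ (cube d)) ∧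
  0 < Klow ∧ ∀ x ∈ cube d, ∀ y ∈ cube d, Klow ≤ κ x y

/-- `κ` is a probability density in its second argument, w.r.t. Lebesgue measure on the cube. -/
def IsMarkovDensity (κ : (Fin d → ℝ) → (Fin d → ℝ) → ℝ) : Prop :=
  ∀ x ∈ cube d, (∀ y ∈ cube d, 0 ≤ κ x y) ∧ ∫ y in cube d, κ x y = 1

/-- `G` is the inverse Rosenblatt transform associated with `κ`. -/
def IsInvRos (κ : (Fin d → ℝ) → (Fin d → ℝ) → ℝ)
    (G : (Fin d → ℝ) → (Fin d → ℝ) → (Fin d → ℝ)) : Prop :=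
  ∀ x ∈ cube d, ∀ u : Fin d → ℝ, (∀ i, u i ∈ Set.Icc (0:ℝ) 1) →
    G x u ∈ cube d ∧ Ros κ x (G x u) = u

/-- The sup-norm ball `B_δ(x)` of radius `δ` around `x`, intersected with the cube. -/
def ball' {d : ℕ} (δ : ℝ) (x : Fin d → ℝ) : Set (Fin d → ℝ) :=
  {y ∈ cube d | ‖y - x‖ ≤ δ}

end Rosenblatt

/-!
Under (A2) every conditional CDF `F_j(· | x, y)` grows at rate at least `Klow / Kup`, where
`Kup` bounds `κ` on the compact `X²`, and depends uniformly continuously on the conditioning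
prefix `y_{<j}`. Around a target point `x` choose intervals `[a_j, b_j] ∋ x_j` whose lengths
shrink fast enough along `j`. If `v` lies well inside `∏_j [F_j(a_j | x), F_j(b_j | x)]`, then
induction on `j` together with the strict monotonicity (A1) puts `F_K^{-1}(x̃, v)` in
`∏_j [a_j, b_j]`. The side lengths of these target boxes are bounded below uniformly in `x̃`
and `x`, so once `b^k` is large enough the net property gives one of the first `b^k` points of
the sequence in each such box.
-/

lemma forall_mem_Icc_of_strictMonoOn {ι : Type*} [LT ι] [WellFoundedLT ι] {s : Set ℝ}
    {F : ι → ℝ → ℝ} {y v a b : ι → ℝ} (hF : ∀ j, StrictMonoOn (F j) s) (hy : ∀ j, y j ∈ s)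
    (ha : ∀ j, a j ∈ s) (hb : ∀ j, b j ∈ s) (hFy : ∀ j, F j (y j) = v j)
    (hbracket : ∀ j, (∀ i < j, y i ∈ Icc (a i) (b i)) → v j ∈ Icc (F j (a j)) (F j (b j))) :
    ∀ j, y j ∈ Icc (a j) (b j) := by
  intro j
  induction j using WellFoundedLT.induction with
  | ind j ih =>
    obtain ⟨hlo, hhi⟩ := hbracket j ih
    rw [← hFy j] at hlo hhi
    exact ⟨((hF j).le_iff_le (ha j) (hy j)).1 hlo, ((hF j).le_iff_le (hy j) (hb j)).1 hhi⟩

lemma exists_radii_le_apply_of_lt {d : ℕ} (Δ : ℝ → ℝ) (hΔ : ∀ r, 0 < r → 0 < Δ r) {ε : ℝ}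
    (hε : 0 < ε) : ∃ ρ : Fin d → ℝ, (∀ j, 0 < ρ j ∧ ρ j ≤ ε) ∧ ∀ i j, i < j → ρ i ≤ Δ (ρ j) := by
  let r : ℕ → ℝ := fun m => Nat.rec ε (fun _ r => min r (Δ r)) m
  have hr_succ : ∀ m, r (m + 1) = min (r m) (Δ (r m)) := fun _ => rfl
  have hr_pos : ∀ m, 0 < r m := fun m => by
    induction m with
    | zero => exact hε
    | succ m ih => rw [hr_succ]; exact lt_min ih (hΔ _ ih)
  have hr_anti : Antitone r :=
    antitone_nat_of_succ_le fun m => by rw [hr_succ]; exact min_le_left _ _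
  refine ⟨fun j => r (d - j), fun j => ⟨hr_pos _, hr_anti (Nat.zero_le _)⟩, fun i j hij => ?_⟩
  have hdij : d - j + 1 ≤ d - i := by have := j.isLt; have := Fin.lt_def.1 hij; omega
  calc r (d - i) ≤ r (d - j + 1) := hr_anti hdij
    _ ≤ Δ (r (d - j)) := by rw [hr_succ]; exact min_le_right _ _

lemma exists_nat_div_pow_mem_Icc {b e : ℕ} (hb : 0 < b) {A B : ℝ} (hA : 0 ≤ A) (hB : B ≤ 1)
    (hAB : A + 2 / (b : ℝ) ^ e ≤ B) :
    ∃ c : ℕ, c < b ^ e ∧ A ≤ c / (b : ℝ) ^ e ∧ (c + 1) / (b : ℝ) ^ e ≤ B := by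
  have hP : (0 : ℝ) < (b : ℝ) ^ e := by positivity
  have hAB' : A * (b : ℝ) ^ e + 2 ≤ B * (b : ℝ) ^ e := by
    have := mul_le_mul_of_nonneg_right hAB hP.le
    rwa [add_mul, div_mul_cancel₀ _ hP.ne'] at this
  have hceil : (⌈A * (b : ℝ) ^ e⌉₊ : ℝ) < A * (b : ℝ) ^ e + 1 :=
    Nat.ceil_lt_add_one (mul_nonneg hA hP.le)
  have hcB : (⌈A * (b : ℝ) ^ e⌉₊ : ℝ) + 1 ≤ B * (b : ℝ) ^ e := by linarith
  refine ⟨⌈A * (b : ℝ) ^ e⌉₊, ?_, (le_div_iff₀ hP).2 (Nat.le_ceil _), (div_le_iff₀ hP).2 hcB⟩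
  have : (⌈A * (b : ℝ) ^ e⌉₊ : ℝ) + 1 ≤ ((b ^ e : ℕ) : ℝ) := by
    push_cast
    nlinarith
  exact_mod_cast (lt_add_one _).trans_le this

lemma exists_Icc_sub_eq {x ℓ : ℝ} (hx : x ∈ Icc (0 : ℝ) 1) (hℓ : 0 ≤ ℓ) (hℓ1 : ℓ ≤ 1) :
    ∃ a b, 0 ≤ a ∧ b ≤ 1 ∧ b - a = ℓ ∧ x ∈ Icc a b :=
  ⟨min x (1 - ℓ), min x (1 - ℓ) + ℓ, le_min hx.1 (by linarith),
    by linarith [min_le_right x (1 - ℓ)], by ring,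
    min_le_left _ _, by rcases min_cases x (1 - ℓ) with h | h <;> linarith [hx.2]⟩

lemma abs_div_sub_div_le {p q p' q' m M β : ℝ} (hm : 0 < m) (hq : m ≤ q) (hq' : m ≤ q')
    (hp' : |p'| ≤ M) (hp : |p - p'| ≤ β) (hqq' : |q - q'| ≤ β) :
    |p / q - p' / q'| ≤ β / m + M * β / (m * m) := by
  have hq0 : 0 < q := hm.trans_le hq
  have hq'0 : 0 < q' := hm.trans_le hq'
  have hsplit : p / q - p' / q' = (p - p') / q + p' * (q' - q) / (q * q') := by
    field_simp
    ring
  rw [hsplit]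
  refine (abs_add_le _ _).trans (add_le_add ?_ ?_)
  · rw [abs_div, abs_of_pos hq0]
    exact div_le_div₀ ((abs_nonneg _).trans hp) hp hm hq
  · rw [abs_div, abs_mul, abs_of_pos (mul_pos hq0 hq'0), abs_sub_comm q']
    exact div_le_div₀ (mul_nonneg ((abs_nonneg _).trans hp') ((abs_nonneg _).trans hqq'))
      (mul_le_mul hp' hqq' (abs_nonneg _) ((abs_nonneg _).trans hp')) (mul_pos hm hm)
      (mul_le_mul hq hq' hm.le hq0.le)

lemma IsTSeq.exists_lt_pow_mem_Icc {d b t : ℕ} {u : ℕ → Fin d → ℝ} (hu : IsTSeq b t u)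
    (hb : 0 < b) (e : Fin d → ℕ) {A B : Fin d → ℝ} (hA : ∀ j, 0 ≤ A j) (hB : ∀ j, B j ≤ 1)
    (hAB : ∀ j, A j + 2 / (b : ℝ) ^ e j ≤ B j) :
    ∃ n < b ^ (t + ∑ j, e j), ∀ j, u n j ∈ Icc (A j) (B j) := by
  choose c hcb hAc hcB using fun j => exists_nat_div_pow_mem_Icc hb (hA j) (hB j) (hAB j)
  have hcard := hu.2 0 (t + ∑ j, e j) (Nat.le_add_right _ _) e c hcb (by omega)
  obtain ⟨n, hn⟩ := Finset.card_pos.1 (hcard ▸ pow_pos hb t)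
  rw [Finset.mem_filter, Finset.mem_Ico, zero_mul, zero_add] at hn
  exact ⟨n, hn.1.2, fun j => ⟨(hAc j).trans (hn.2 j).1, (hn.2 j).2.le.trans (hcB j)⟩⟩

section Cube

variable {d : ℕ}

lemma cube_eq_Icc (d : ℕ) : cube d = Icc 0 1 := by
  ext x
  simp only [cube, mem_Icc, Pi.le_def, forall_and, Pi.zero_apply, Pi.one_apply]
  rfl

lemma isCompact_cube (d : ℕ) : IsCompact (cube d) := cube_eq_Icc d ▸ isCompact_Icc

lemma measurableSet_cube (d : ℕ) : MeasurableSet (cube d) := cube_eq_Icc d ▸ measurableSet_Icc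

lemma volume_cube (d : ℕ) : volume (cube d) = 1 := by
  simp [cube_eq_Icc, Real.volume_Icc_pi]

lemma volume_real_cube (d : ℕ) : volume.real (cube d) = 1 := by
  simp [measureReal_def, volume_cube]

lemma le_setIntegral_cube {f : (Fin d → ℝ) → ℝ} {m : ℝ} (hf : IntegrableOn f (cube d))
    (h : ∀ z ∈ cube d, m ≤ f z) : m ≤ ∫ z in cube d, f z := by
  simpa [volume_real_cube] using
    setIntegral_ge_of_const_le_real (measurableSet_cube d) (by simp [volume_cube]) h hf

lemma setIntegral_cube_le {f : (Fin d → ℝ) → ℝ} {M : ℝ} (hf : IntegrableOn f (cube d))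
    (h : ∀ z ∈ cube d, f z ≤ M) : ∫ z in cube d, f z ≤ M := by
  have := le_setIntegral_cube (f := fun z => -f z) hf.neg fun z hz => neg_le_neg (h z hz)
  rw [integral_neg] at this
  linarith

lemma abs_setIntegral_cube_le {f : (Fin d → ℝ) → ℝ} {C : ℝ} (h : ∀ z ∈ cube d, |f z| ≤ C) :
    |∫ z in cube d, f z| ≤ C := by
  have := norm_setIntegral_le_of_norm_le_const (f := f)
    (by rw [volume_cube]; exact ENNReal.one_lt_top) h
  rwa [volume_real_cube, mul_one] at this

lemma update_mem_cube {y : Fin d → ℝ} (hy : y ∈ cube d) (i : Fin d) {r : ℝ}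
    (hr : r ∈ Icc (0 : ℝ) 1) : Function.update y i r ∈ cube d := by
  intro j
  rcases eq_or_ne j i with rfl | h
  · simpa using hr
  · simpa [Function.update_of_ne h] using hy j

lemma setIntegral_cube_eq_insertNth {n : ℕ} (i : Fin (n + 1)) {g : (Fin (n + 1) → ℝ) → ℝ}
    (hg : IntegrableOn g (cube (n + 1))) :
    ∫ z in cube (n + 1), g z = ∫ r in Icc 0 1, ∫ w in cube n, g (i.insertNth r w) := by
  set e : ℝ × (Fin n → ℝ) ≃ᵐ (Fin (n + 1) → ℝ) :=
    (MeasurableEquiv.piFinSuccAbove (fun _ => ℝ) i).symm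
  have he : MeasurePreserving e :=
    (volume_preserving_piFinSuccAbove (fun _ : Fin (n + 1) => ℝ) i).symm _
  have hpre : e ⁻¹' cube (n + 1) = Icc 0 1 ×ˢ cube n := by
    rw [cube_eq_Icc, cube_eq_Icc]
    exact ((Fin.insertNthOrderIso (fun _ => ℝ) i).preimage_Icc _ _).trans (Icc_prod_eq _ _)
  have hint := (he.integrableOn_comp_preimage e.measurableEmbedding).2 hg
  rw [hpre, Measure.volume_eq_prod] at hint
  rw [← he.map_eq, setIntegral_map_equiv, hpre, Measure.volume_eq_prod,
    setIntegral_prod (fun x => g (e x)) hint]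
  rfl

lemma intervalIntegral_setIntegral_cube_update {g : (Fin d → ℝ) → ℝ}
    (hg : ContinuousOn g (cube d)) (i : Fin d) :
    ∫ r in (0 : ℝ)..1, ∫ z in cube d, g (Function.update z i r) = ∫ z in cube d, g z := by
  obtain ⟨n, rfl⟩ : ∃ n, d = n + 1 := ⟨d - 1, by have := i.isLt; omega⟩
  have hint : ∀ r ∈ Icc (0 : ℝ) 1,
      IntegrableOn (fun z => g (Function.update z i r)) (cube (n + 1)) :=
    fun r hr => ((hg.comp (continuous_id.update i continuous_const).continuousOn) fun z hz =>
      update_mem_cube hz i hr).integrableOn_compact (isCompact_cube _)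
  have hslice : ∀ r ∈ Icc (0 : ℝ) 1, ∫ z in cube (n + 1), g (Function.update z i r) =
      ∫ w in cube n, g (i.insertNth r w) := by
    intro r hr
    simp [setIntegral_cube_eq_insertNth i (hint r hr), Fin.update_insertNth]
  rw [intervalIntegral.integral_of_le zero_le_one, ← integral_Icc_eq_integral_Ioc,
    setIntegral_congr_fun measurableSet_Icc hslice,
    setIntegral_cube_eq_insertNth i (hg.integrableOn_compact (isCompact_cube _))]

end Cube

section Marginal

variable {d : ℕ}

def splice (i : ℕ) (y z : Fin d → ℝ) : Fin d → ℝ := fun j => if (j : ℕ) < i then y j else z j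

lemma marg_eq_setIntegral_splice (κ : (Fin d → ℝ) → (Fin d → ℝ) → ℝ) (i : ℕ) (x y : Fin d → ℝ) :
    marg κ i x y = ∫ z in cube d, κ x (splice i y z) := rfl

lemma splice_mem_cube (i : ℕ) {y z : Fin d → ℝ} (hy : y ∈ cube d) (hz : z ∈ cube d) :
    splice i y z ∈ cube d := by
  intro j
  unfold splice
  split_ifs
  exacts [hy j, hz j]

lemma continuous_splice (i : ℕ) (y : Fin d → ℝ) : Continuous (splice i y) :=
  continuous_pi fun j => by
    unfold splice
    split_ifs
    exacts [continuous_const, continuous_apply j]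

lemma dist_splice_le {i : ℕ} {y y' : Fin d → ℝ} {δ : ℝ} (hδ : 0 ≤ δ)
    (h : ∀ j : Fin d, (j : ℕ) < i → |y j - y' j| ≤ δ) (z : Fin d → ℝ) :
    dist (splice i y z) (splice i y' z) ≤ δ := by
  refine (dist_pi_le_iff hδ).2 fun j => ?_
  unfold splice
  split_ifs with hj
  · rw [Real.dist_eq]; exact h j hj
  · simpa using hδ

lemma splice_update_self (i : Fin d) (y z : Fin d → ℝ) (r : ℝ) :
    splice i (Function.update y i r) z = splice i y z := by
  funext j
  unfold splice
  split_ifs with hj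
  · rw [Function.update_of_ne (Fin.ne_of_lt hj)]
  · rfl

lemma splice_succ_update (i : Fin d) (y z : Fin d → ℝ) (r : ℝ) :
    splice (i + 1) (Function.update y i r) z = splice i y (Function.update z i r) := by
  funext j
  unfold splice
  rcases lt_trichotomy j i with hj | rfl | hj
  · simp [Fin.ne_of_lt hj, Nat.lt_succ_of_lt hj, Fin.lt_def.1 hj]
  · simp
  · simp [Fin.ne_of_gt hj, Nat.not_lt.2 (Fin.lt_def.1 hj), Nat.not_lt.2 (Fin.lt_def.1 hj).le]

lemma marg_update_self (κ : (Fin d → ℝ) → (Fin d → ℝ) → ℝ) (i : Fin d) (x y : Fin d → ℝ)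
    (r : ℝ) : marg κ i x (Function.update y i r) = marg κ i x y := by
  simp only [marg_eq_setIntegral_splice, splice_update_self]

variable {κ : (Fin d → ℝ) → (Fin d → ℝ) → ℝ}
  (hκ : ContinuousOn (fun p : (Fin d → ℝ) × (Fin d → ℝ) => κ p.1 p.2) (cube d ×ˢ cube d))

include hκ

lemma continuousOn_kernel_splice {x y : Fin d → ℝ} (hx : x ∈ cube d) (hy : y ∈ cube d) (i : ℕ) :
    ContinuousOn (fun z => κ x (splice i y z)) (cube d) :=
  hκ.comp (continuous_const.prodMk (continuous_splice i y)).continuousOn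
    fun _ hz => mk_mem_prod hx (splice_mem_cube i hy hz)

lemma integrableOn_kernel_splice {x y : Fin d → ℝ} (hx : x ∈ cube d) (hy : y ∈ cube d)
    (i : ℕ) : IntegrableOn (fun z => κ x (splice i y z)) (cube d) :=
  (continuousOn_kernel_splice hκ hx hy i).integrableOn_compact (isCompact_cube d)

lemma le_marg {m : ℝ} (hm : ∀ x ∈ cube d, ∀ y ∈ cube d, m ≤ κ x y) {x y : Fin d → ℝ}
    (hx : x ∈ cube d) (hy : y ∈ cube d) (i : ℕ) : m ≤ marg κ i x y :=
  le_setIntegral_cube (integrableOn_kernel_splice hκ hx hy i) fun _ hz =>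
    hm x hx _ (splice_mem_cube i hy hz)

lemma marg_le {M : ℝ} (hM : ∀ x ∈ cube d, ∀ y ∈ cube d, κ x y ≤ M) {x y : Fin d → ℝ}
    (hx : x ∈ cube d) (hy : y ∈ cube d) (i : ℕ) : marg κ i x y ≤ M :=
  setIntegral_cube_le (integrableOn_kernel_splice hκ hx hy i) fun _ hz =>
    hM x hx _ (splice_mem_cube i hy hz)

lemma exists_abs_marg_sub_le {α : ℝ} (hα : 0 < α) :
    ∃ δ > 0, ∀ (i : ℕ), ∀ x ∈ cube d, ∀ y ∈ cube d, ∀ y' ∈ cube d,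
      (∀ j : Fin d, (j : ℕ) < i → |y j - y' j| ≤ δ) → |marg κ i x y - marg κ i x y'| ≤ α := by
  obtain ⟨δ, hδ, H⟩ := Metric.uniformContinuousOn_iff_le.1
    (((isCompact_cube d).prod (isCompact_cube d)).uniformContinuousOn_of_continuous hκ) α hα
  refine ⟨δ, hδ, fun i x hx y hy y' hy' hyy' => ?_⟩
  rw [marg_eq_setIntegral_splice, marg_eq_setIntegral_splice,
    ← integral_sub (integrableOn_kernel_splice hκ hx hy i)
      (integrableOn_kernel_splice hκ hx hy' i)]
  refine abs_setIntegral_cube_le fun z hz => ?_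
  have hdist : dist (x, splice i y z) (x, splice i y' z) ≤ δ := by
    rw [Prod.dist_eq, dist_self]
    exact max_le hδ.le (dist_splice_le hδ.le hyy' z)
  exact H _ (mk_mem_prod hx (splice_mem_cube i hy hz)) _ (mk_mem_prod hx (splice_mem_cube i hy' hz))
    hdist

lemma continuousOn_marg_update {x y : Fin d → ℝ} (hx : x ∈ cube d) (hy : y ∈ cube d)
    (i' : ℕ) (i : Fin d) :
    ContinuousOn (fun r => marg κ i' x (Function.update y i r)) (Icc 0 1) := by
  refine Metric.continuousOn_iff.2 fun r hr α hα => ?_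
  obtain ⟨δ, hδ, H⟩ := exists_abs_marg_sub_le hκ (half_pos hα)
  refine ⟨δ, hδ, fun r' hr' hrr' => ?_⟩
  have hcoord : ∀ j : Fin d, (j : ℕ) < i' →
      |Function.update y i r' j - Function.update y i r j| ≤ δ := by
    intro j _
    rcases eq_or_ne j i with rfl | hj
    · simpa [← Real.dist_eq] using hrr'.le
    · simpa [Function.update_of_ne hj] using hδ.le
  rw [Real.dist_eq]
  exact (H i' x hx _ (update_mem_cube hy i hr') _ (update_mem_cube hy i hr) hcoord).trans_lt
    (half_lt_self hα)

end Marginal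

section ConditionalCDF

variable {d : ℕ} {κ : (Fin d → ℝ) → (Fin d → ℝ) → ℝ} {Klow Kup : ℝ}
  (hκ : ContinuousOn (fun p : (Fin d → ℝ) × (Fin d → ℝ) => κ p.1 p.2) (cube d ×ˢ cube d))
  (hKlow : 0 < Klow) (hlow : ∀ x ∈ cube d, ∀ y ∈ cube d, Klow ≤ κ x y)
  (hup : ∀ x ∈ cube d, ∀ y ∈ cube d, κ x y ≤ Kup)

include hKlow hlow hup in
lemma upper_bound_pos : 0 < Kup := by
  have h0 : (0 : Fin d → ℝ) ∈ cube d := fun _ => left_mem_Icc.2 zero_le_one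
  exact hKlow.trans_le ((hlow 0 h0 0 h0).trans (hup 0 h0 0 h0))

include hκ hKlow hlow in
lemma intervalIntegrable_condDensity_update {x y : Fin d → ℝ} (hx : x ∈ cube d)
    (hy : y ∈ cube d) (i : Fin d) {a b : ℝ} (ha : a ∈ Icc (0 : ℝ) 1) (hb : b ∈ Icc (0 : ℝ) 1) :
    IntervalIntegrable (fun r => condDensity κ i x (Function.update y i r)) volume a b :=
  ((continuousOn_marg_update hκ hx hy _ i).div (continuousOn_marg_update hκ hx hy _ i)
    (fun _ hr => (hKlow.trans_le (le_marg hκ hlow hx (update_mem_cube hy i hr) _)).ne')).mono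
    (uIcc_subset_Icc ha hb) |>.intervalIntegrable

include hκ hKlow hlow hup in
lemma div_le_condDensity {x y : Fin d → ℝ} (hx : x ∈ cube d) (hy : y ∈ cube d) (i : Fin d) :
    Klow / Kup ≤ condDensity κ i x y :=
  div_le_div₀ (hKlow.le.trans (le_marg hκ hlow hx hy _)) (le_marg hκ hlow hx hy _)
    (hKlow.trans_le (le_marg hκ hlow hx hy _)) (marg_le hκ hup hx hy _)

include hκ hKlow hlow hup in
lemma mul_sub_le_condCDF'_sub {x y : Fin d → ℝ} (hx : x ∈ cube d) (hy : y ∈ cube d)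
    (i : Fin d) {a b : ℝ} (ha : a ∈ Icc (0 : ℝ) 1) (hb : b ∈ Icc (0 : ℝ) 1) (hab : a ≤ b) :
    Klow / Kup * (b - a) ≤ condCDF' κ i x y b - condCDF' κ i x y a := by
  have h0 : (0 : ℝ) ∈ Icc (0 : ℝ) 1 := left_mem_Icc.2 zero_le_one
  unfold condCDF'
  rw [intervalIntegral.integral_interval_sub_left
    (intervalIntegrable_condDensity_update hκ hKlow hlow hx hy i h0 hb)
    (intervalIntegrable_condDensity_update hκ hKlow hlow hx hy i h0 ha)]
  calc Klow / Kup * (b - a) = ∫ _ in a..b, Klow / Kup := by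
        rw [intervalIntegral.integral_const, smul_eq_mul, mul_comm]
    _ ≤ _ := intervalIntegral.integral_mono_on hab intervalIntegrable_const
      (intervalIntegrable_condDensity_update hκ hKlow hlow hx hy i ha hb) fun r hr =>
        div_le_condDensity hκ hKlow hlow hup hx
          (update_mem_cube hy i ⟨ha.1.trans hr.1, hr.2.trans hb.2⟩) i

include hκ hKlow hlow in
lemma condCDF'_one {x y : Fin d → ℝ} (hx : x ∈ cube d) (hy : y ∈ cube d) (i : Fin d) :
    condCDF' κ i x y 1 = 1 := by
  have hpos : marg κ i x y ≠ 0 := (hKlow.trans_le (le_marg hκ hlow hx hy _)).ne'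
  have hnum : ∫ r in (0 : ℝ)..1, marg κ (i + 1) x (Function.update y i r) = marg κ i x y := by
    simp only [marg_eq_setIntegral_splice, splice_succ_update]
    exact intervalIntegral_setIntegral_cube_update (continuousOn_kernel_splice hκ hx hy i) i
  simp only [condCDF', condDensity, marg_update_self, intervalIntegral.integral_div, hnum,
    div_self hpos]

include hκ hKlow hlow hup in
lemma exists_abs_condCDF'_sub_le {α : ℝ} (hα : 0 < α) :
    ∃ δ > 0, ∀ (i : Fin d), ∀ x ∈ cube d, ∀ y ∈ cube d, ∀ y' ∈ cube d,
      (∀ j, j < i → |y j - y' j| ≤ δ) →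
        ∀ s ∈ Icc (0 : ℝ) 1, |condCDF' κ i x y s - condCDF' κ i x y' s| ≤ α := by
  have hKup : 0 < Kup := upper_bound_pos hKlow hlow hup
  set β := α * (Klow * Klow) / (Klow + Kup)
  obtain ⟨δ, hδ, H⟩ := exists_abs_marg_sub_le hκ (show 0 < β by positivity)
  refine ⟨δ, hδ, fun i x hx y hy y' hy' hyy' s hs => ?_⟩
  have hmarg : ∀ r ∈ Icc (0 : ℝ) 1, ∀ i' : ℕ, i' ≤ i + 1 →
      |marg κ i' x (Function.update y i r) - marg κ i' x (Function.update y' i r)| ≤ β := by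
    refine fun r hr i' hi' => H i' x hx _ (update_mem_cube hy i hr) _ (update_mem_cube hy' i hr)
      fun j hj => ?_
    rcases eq_or_ne j i with rfl | hji
    · simpa using hδ.le
    · rw [Function.update_of_ne hji, Function.update_of_ne hji]
      exact hyy' j (lt_of_le_of_ne (Fin.le_def.2 (by omega)) hji)
  have hpt : ∀ r ∈ uIoc (0 : ℝ) s, ‖condDensity κ i x (Function.update y i r) -
      condDensity κ i x (Function.update y' i r)‖ ≤ α := by
    intro r hr
    rw [uIoc_of_le hs.1] at hr
    have hr' : r ∈ Icc (0 : ℝ) 1 := ⟨hr.1.le, hr.2.trans hs.2⟩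
    have hy'r := update_mem_cube hy' i hr'
    calc _ ≤ β / Klow + Kup * β / (Klow * Klow) :=
          abs_div_sub_div_le hKlow (le_marg hκ hlow hx (update_mem_cube hy i hr') _)
            (le_marg hκ hlow hx hy'r _)
            (abs_le.2 ⟨by linarith [le_marg hκ hlow hx hy'r (i + 1)], marg_le hκ hup hx hy'r _⟩)
            (hmarg r hr' _ le_rfl) (hmarg r hr' _ (Nat.le_succ _))
      _ = α := by simp only [β]; field_simp
  unfold condCDF'
  rw [← intervalIntegral.integral_sub
    (intervalIntegrable_condDensity_update hκ hKlow hlow hx hy i (left_mem_Icc.2 zero_le_one) hs)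
    (intervalIntegrable_condDensity_update hκ hKlow hlow hx hy' i (left_mem_Icc.2 zero_le_one) hs)]
  calc _ ≤ α * |s - 0| := intervalIntegral.norm_integral_le_of_norm_le_const hpt
    _ ≤ α := by rw [sub_zero, abs_of_nonneg hs.1]; nlinarith [hs.2]

include hκ hKlow hlow hup in
lemma condCDF'_mem_Icc {x y : Fin d → ℝ} (hx : x ∈ cube d) (hy : y ∈ cube d) (i : Fin d)
    {s : ℝ} (hs : s ∈ Icc (0 : ℝ) 1) : condCDF' κ i x y s ∈ Icc (0 : ℝ) 1 := by
  have hc : 0 ≤ Klow / Kup := div_nonneg hKlow.le (upper_bound_pos hKlow hlow hup).le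
  have h0 := mul_sub_le_condCDF'_sub hκ hKlow hlow hup hx hy i (left_mem_Icc.2 zero_le_one) hs hs.1
  have h1 := mul_sub_le_condCDF'_sub hκ hKlow hlow hup hx hy i hs (right_mem_Icc.2 zero_le_one) hs.2
  rw [condCDF'_one hκ hKlow hlow hx hy] at h1
  have hF0 : condCDF' κ i x y 0 = 0 := intervalIntegral.integral_same
  constructor <;> nlinarith [hs.1, hs.2]

end ConditionalCDF

section InverseRosenblatt

variable {d : ℕ} {κ : (Fin d → ℝ) → (Fin d → ℝ) → ℝ} {Klow : ℝ}
  {G : (Fin d → ℝ) → (Fin d → ℝ) → (Fin d → ℝ)}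

lemma A2.exists_le (hA2 : A2 κ Klow) : ∃ Kup, ∀ x ∈ cube d, ∀ y ∈ cube d, κ x y ≤ Kup := by
  obtain ⟨C, hC⟩ := ((isCompact_cube d).prod (isCompact_cube d)).exists_bound_of_continuousOn hA2.1
  exact ⟨C, fun x hx y hy => (le_abs_self _).trans (hC (x, y) (mk_mem_prod hx hy))⟩

/-- Induction over `j`: once `(G xt v)_{<j}` lies in the box, `hmod` keeps `F_j(· | G xt v)`
within `η j` of `F_j(· | xx)`, so `v j` is bracketed and (A1) places `(G xt v)_j`. -/
lemma IsInvRos.apply_mem_Icc (hG : IsInvRos κ G) (hA1 : A1 κ) {xt xx v a b η δ : Fin d → ℝ}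
    (hxt : xt ∈ cube d) (ha : a ∈ cube d) (hb : b ∈ cube d) (hxx : ∀ j, xx j ∈ Icc (a j) (b j))
    (hv : ∀ j, v j ∈ Icc (0 : ℝ) 1)
    (hmod : ∀ j, ∀ y ∈ cube d, (∀ i < j, |y i - xx i| ≤ δ j) →
      ∀ s ∈ Icc (0 : ℝ) 1, |condCDF' κ j xt y s - condCDF' κ j xt xx s| ≤ η j)
    (hδ : ∀ i j, i < j → b i - a i ≤ δ j)
    (hvj : ∀ j, v j ∈ Icc (condCDF' κ j xt xx (a j) + η j) (condCDF' κ j xt xx (b j) - η j)) :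
    ∀ j, G xt v j ∈ Icc (a j) (b j) := by
  obtain ⟨hyc, hRos⟩ := hG xt hxt v hv
  refine forall_mem_Icc_of_strictMonoOn (fun j => hA1 xt hxt _ hyc j) hyc ha hb
    (fun j => congrFun hRos j) fun j hpre => ?_
  have hclose : ∀ i < j, |G xt v i - xx i| ≤ δ j := fun i hi =>
    (Real.dist_le_of_mem_Icc (hpre i hi) (hxx i)).trans (hδ i j hi)
  have h := fun s hs => abs_le.1 (hmod j _ hyc hclose s hs)
  exact ⟨by linarith [(h (a j) (ha j)).2, (hvj j).1], by linarith [(h (b j) (hb j)).1, (hvj j).2]⟩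

lemma IsInvRos.exists_box_mapsTo_closedBall (hG : IsInvRos κ G) (hA1 : A1 κ)
    (hA2 : A2 κ Klow) {ε : ℝ} (hε : 0 < ε) :
    ∃ η : Fin d → ℝ, (∀ j, 0 < η j) ∧ ∀ xt ∈ cube d, ∀ xx ∈ cube d, ∃ A B : Fin d → ℝ,
      (∀ j, 0 ≤ A j ∧ A j + η j ≤ B j ∧ B j ≤ 1) ∧
        MapsTo (G xt) (univ.pi fun j => Icc (A j) (B j)) (Metric.closedBall xx ε) := by
  obtain ⟨Kup, hup⟩ := hA2.exists_le
  obtain ⟨hκ, hKlow, hlow⟩ := hA2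
  set c := Klow / Kup
  have hc : 0 < c := div_pos hKlow (upper_bound_pos hKlow hlow hup)
  choose! Δ hΔ0 hΔ using fun α (hα : 0 < α) => exists_abs_condCDF'_sub_le hκ hKlow hlow hup hα
  -- `F_j(· | xx)` rises by at least `c ρ_j / 2` across `[a_j, b_j]`; margins `c ρ_j / 8` on both
  -- sides absorb the prefix error, which `ρ_i ≤ Δ (c ρ_j / 8)` for `i < j` keeps small enough.
  obtain ⟨ρ, hρ, hρΔ⟩ := exists_radii_le_apply_of_lt (d := d) (fun r => Δ (c * r / 8))
    (fun r hr => hΔ0 _ (by positivity)) (lt_min hε one_pos)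
  refine ⟨fun j => c * ρ j / 4, fun j => by have := (hρ j).1; positivity, fun xt hxt xx hxx => ?_⟩
  choose a b ha0 hb1 hab hxab using fun j =>
    exists_Icc_sub_eq (hxx j) (half_pos (hρ j).1).le (by linarith [(hρ j).2, min_le_right ε 1])
  have ha : a ∈ cube d := fun j => ⟨ha0 j, by linarith [(hρ j).1, hab j, hb1 j]⟩
  have hb : b ∈ cube d := fun j => ⟨by linarith [(hρ j).1, hab j, ha0 j], hb1 j⟩
  have hcρ : ∀ j, 0 < c * ρ j := fun j => mul_pos hc (hρ j).1
  have hFa := fun j => condCDF'_mem_Icc hκ hKlow hlow hup hxt hxx j (ha j)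
  have hFb := fun j => condCDF'_mem_Icc hκ hKlow hlow hup hxt hxx j (hb j)
  have hFab : ∀ j, c * (ρ j / 2) ≤ condCDF' κ j xt xx (b j) - condCDF' κ j xt xx (a j) :=
    fun j => hab j ▸ mul_sub_le_condCDF'_sub hκ hKlow hlow hup hxt hxx j (ha j) (hb j)
      (by linarith [hab j, (hρ j).1])
  refine ⟨fun j => condCDF' κ j xt xx (a j) + c * ρ j / 8,
    fun j => condCDF' κ j xt xx (b j) - c * ρ j / 8, fun j => ⟨?_, ?_, ?_⟩, fun v hv => ?_⟩
  · linarith [(hFa j).1, hcρ j]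
  · dsimp only
    linarith [hFab j]
  · linarith [(hFb j).2, hcρ j]
  have hv' := fun j => hv j (mem_univ j)
  have hloc := hG.apply_mem_Icc hA1 hxt ha hb hxab
    (fun j => ⟨by linarith [(hFa j).1, (hv' j).1, hcρ j],
      by linarith [(hFb j).2, (hv' j).2, hcρ j]⟩)
    (fun j y hy hpre s hs => hΔ _ (by linarith [hcρ j]) j xt hxt y hy xx hxx hpre s hs)
    (fun i j hij => by linarith [hρΔ i j hij, hab i, (hρ i).1]) hv'
  refine Metric.mem_closedBall.2 ((dist_pi_le_iff hε.le).2 fun j => ?_)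
  linarith [Real.dist_le_of_mem_Icc (hloc j) (hxab j), hab j, (hρ j).2, min_le_left ε 1]

end InverseRosenblatt

theorem dispersion_tendsto_zero_general
    {d b t : ℕ} (hb : 2 ≤ b)
    (u : ℕ → Fin d → ℝ) (hu : IsTSeq b t u)
    (κ : (Fin d → ℝ) → (Fin d → ℝ) → ℝ)
    (hA1 : A1 κ) (Klow : ℝ) (hA2 : A2 κ Klow)
    (G : (Fin d → ℝ) → (Fin d → ℝ) → (Fin d → ℝ)) (hG : IsInvRos κ G) :
    ∀ ε : ℝ, 0 < ε → ∃ k0 : ℕ, ∀ k : ℕ, k0 ≤ k →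
      ∀ xt ∈ cube d, ∀ xx ∈ cube d, ∃ n : ℕ, n < b ^ k ∧ ‖G xt (u n) - xx‖ ≤ ε := by
  intro ε hε
  obtain ⟨η, hη, hbox⟩ := hG.exists_box_mapsTo_closedBall hA1 hA2 hε
  have hb1 : (1 : ℝ) < b := by exact_mod_cast hb
  have hexp : ∀ j, ∃ e : ℕ, 2 / (b : ℝ) ^ e ≤ η j := fun j => by
    obtain ⟨e, he⟩ := pow_unbounded_of_one_lt (2 / η j) hb1
    exact ⟨e, (div_le_iff₀ (by positivity)).2 (by rw [div_lt_iff₀ (hη j)] at he; linarith)⟩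
  choose e he using hexp
  refine ⟨t + ∑ j, e j, fun k hk xt hxt xx hxx => ?_⟩
  obtain ⟨A, B, hAB, hmaps⟩ := hbox xt hxt xx hxx
  obtain ⟨n, hn, hnAB⟩ := hu.exists_lt_pow_mem_Icc (by omega) e (fun j => (hAB j).1)
    (fun j => (hAB j).2.2) fun j => by linarith [he j, (hAB j).2.1]
  refine ⟨n, hn.trans_le (Nat.pow_le_pow_right (by omega) hk), ?_⟩
  simpa [dist_eq_norm] using hmaps fun j _ => hnAB j

/-- **Dispersion corollary.** Under (A1)-(A2), the dispersion
`d_X(k, x̃) = sup_x min_{n < b^k} ‖F_K^{-1}(x̃, u^n) - x‖_∞` tends to `0` as `k → ∞`,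
uniformly in `x̃ ∈ X`. -/
theorem dispersion_tendsto_zero
    {d b t : ℕ} (hd : 0 < d) (hb : 2 ≤ b)
    (u : ℕ → Fin d → ℝ) (hu : IsTSeq b t u)
    (κ : (Fin d → ℝ) → (Fin d → ℝ) → ℝ) (hκ : IsMarkovDensity κ)
    (hA1 : A1 κ) (Klow : ℝ) (hA2 : A2 κ Klow)
    (G : (Fin d → ℝ) → (Fin d → ℝ) → (Fin d → ℝ)) (hG : IsInvRos κ G) :
    ∀ ε : ℝ, 0 < ε → ∃ k0 : ℕ, ∀ k : ℕ, k0 ≤ k →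
      ∀ xt ∈ cube d, ∀ xx ∈ cube d, ∃ n : ℕ, n < b ^ k ∧ ‖G xt (u n) - xx‖ ≤ ε :=
  dispersion_tendsto_zero_general hb u hu κ hA1 Klow hA2 G hG
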